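/- Let 0 < γ < 1/4 and let C_γ ⊂ [1,2] be the middle (1−2γ)-Cantor set with Cantor function f_γ. Then there exists a constant c > 0 such that for every interval J ⊂ [0,1], the probability that Brownian motion B satisfies B(t) = f_γ(t) for some t ∈ C_γ ∩ f_γ^{-1}(J) is at most c·|J|, where |J| is the length of J. -/

import Mathlib

/-!
Fix the scale `n` with `2⁻ⁿ⁻¹ < b - a ≤ 2⁻ⁿ`. A point of `C_γ` lies in a level-`n` interval of
the construction, of length `γⁿ ≤ 4⁻ⁿ`, which `f` maps onto a dyadic interval of length `2⁻ⁿ`;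
at most three of these dyadic intervals meet `[a, b]`. On each of the corresponding time
intervals `[u, v] ⊆ [1, 2]`, the event `B t = f t ∈ [a, b]` forces `B` to visit `[a, b]`.

The probability of such a visit is `O(b - a + √(v - u)) = O(2⁻ⁿ)` by a first-entrance argument:
after the first visit, at time `s`, the increment `B v - B s` is independent of the past and, by
Chebyshev, smaller than `2√(v - u)` with probability at least `3/4`; hence the visit probability
is at most `4/3` times `P(B v ∈ [a - 2√(v - u), b + 2√(v - u)])`, and `B v` has density at most
`1` since `v ≥ 1`. Visits in continuous time are approximated along dyadic grids.
-/

open MeasureTheory ProbabilityTheory Filter Set Topology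
open scoped ENNReal

/-- `B` is a standard one-dimensional Brownian motion started at `0` under the
probability measure `μ`: it starts at `0`, has continuous paths, Gaussian increments
with mean `0` and variance given by the time increment, and independent increments. -/
structure IsBrownianMotion {Ω : Type*} [MeasurableSpace Ω]
    (μ : Measure Ω) (B : ℝ → Ω → ℝ) : Prop where
  isProbabilityMeasure : IsProbabilityMeasure μ
  measurable : ∀ t : ℝ, Measurable (B t)
  start : ∀ ω, B 0 ω = 0
  cont_paths : ∀ ω, Continuous fun t => B t ω
  gauss_incr : ∀ s t : ℝ, 0 ≤ s → s ≤ t →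
    μ.map (fun ω => B t ω - B s ω) = gaussianReal 0 (Real.toNNReal (t - s))
  indep_incr : ∀ (n : ℕ) (u : ℕ → ℝ), (∀ i, 0 ≤ u i) → Monotone u →
    iIndepFun
      (fun (i : Fin n) ω => B (u (i.1 + 1)) ω - B (u i.1) ω) μ

/-- The set of zeros of `g` in `(0, ∞)`. -/
def zeroSet (g : ℝ → ℝ) : Set ℝ := {t : ℝ | 0 < t ∧ g t = 0}

/-- `t` is an isolated point of the set `Z ⊆ ℝ`. -/
def IsolatedPointOf (Z : Set ℝ) (t : ℝ) : Prop :=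
  t ∈ Z ∧ ∃ ε > 0, ∀ s ∈ Z, |s - t| < ε → s = t

/-- The `n`-th stage of the construction of the middle `(1-2γ)`-Cantor set inside `[1,2]`:
`middleCantorPre γ 0 = [1,2]`, and each stage is obtained from the previous one by applying the
two affine contractions of ratio `γ` fixing `1` and `2` respectively (this replaces each
component interval by its leftmost and rightmost closed subintervals scaled by `γ`). -/
def middleCantorPre (gamma : ℝ) : ℕ → Set ℝ
  | 0 => Set.Icc 1 2
  | n + 1 => (fun x => 1 + gamma * (x - 1)) '' middleCantorPre gamma n ∪
      (fun x => 2 - gamma * (2 - x)) '' middleCantorPre gamma n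

/-- The middle `(1-2γ)`-Cantor set inside `[1,2]`. -/
def middleCantorSet (gamma : ℝ) : Set ℝ := ⋂ n, middleCantorPre gamma n

/-- `f` restricted to `[1,2]` is the Cantor function associated to the middle
`(1-2γ)`-Cantor set in `[1,2]`: it is the unique continuous function on `[1,2]` satisfying the
self-similarity functional equations (which force `f 1 = 0`, `f 2 = 1`, monotonicity, constancy
on the complementary intervals, and the dyadic values at endpoints of the construction). -/
def IsCantorFunction (gamma : ℝ) (f : ℝ → ℝ) : Prop :=
  ContinuousOn f (Set.Icc 1 2) ∧
  (∀ t ∈ Set.Icc (0 : ℝ) gamma, f (1 + t) = f (1 + t / gamma) / 2) ∧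
  (∀ t ∈ Set.Icc gamma (1 - gamma), f (1 + t) = 1 / 2) ∧
  (∀ t ∈ Set.Icc (1 - gamma) 1, f (1 + t) = 1 / 2 + f (1 + (t - (1 - gamma)) / gamma) / 2)

open scoped NNReal

lemma gaussianPDFReal_le_one (m : ℝ) {V : ℝ≥0} (hV : 1 ≤ (V : ℝ)) (x : ℝ) :
    gaussianPDFReal m V x ≤ 1 := by
  rw [gaussianPDFReal]
  have hsqrt : 1 ≤ Real.sqrt (2 * Real.pi * V) :=
    Real.one_le_sqrt.mpr (by nlinarith [Real.pi_gt_three])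
  have hexp : Real.exp (-(x - m) ^ 2 / (2 * V)) ≤ 1 :=
    Real.exp_le_one_iff.mpr (div_nonpos_of_nonpos_of_nonneg (by nlinarith [sq_nonneg (x - m)])
      (by positivity))
  calc (Real.sqrt (2 * Real.pi * V))⁻¹ * Real.exp (-(x - m) ^ 2 / (2 * V))
      ≤ 1 * 1 := mul_le_mul (inv_le_one_of_one_le₀ hsqrt) hexp (Real.exp_nonneg _) zero_le_one
    _ = 1 := one_mul 1

lemma gaussianReal_le_volume (m : ℝ) {V : ℝ≥0} (hV : 1 ≤ (V : ℝ)) (s : Set ℝ) :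
    gaussianReal m V s ≤ volume s := by
  have hV0 : V ≠ 0 := by rintro rfl; norm_num at hV
  rw [gaussianReal_apply m hV0, ← setLIntegral_one]
  exact lintegral_mono fun x => ENNReal.ofReal_le_one.mpr (gaussianPDFReal_le_one m hV x)

lemma gaussianReal_le_abs_sub_le_div_sq (m : ℝ) (V : ℝ≥0) {c : ℝ} (hc : 0 < c) :
    gaussianReal m V {y | c ≤ |y - m|} ≤ ENNReal.ofReal (V / c ^ 2) := by
  simpa [variance_id_gaussianReal, integral_id_gaussianReal] using
    meas_ge_le_variance_div_sq (memLp_id_gaussianReal' (μ := m) (v := V) 2 (by simp)) hc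

-- First-entrance decomposition: `disjointed E j` is the event that `E j` is the first `E i`
-- to occur.
lemma mul_measure_iUnion_le_of_disjointed {Ω : Type*} [MeasurableSpace Ω] {μ : Measure Ω}
    {E G : ℕ → Set Ω} {H : Set Ω} {p : ℝ≥0∞}
    (hE : ∀ j, MeasurableSet (E j)) (hG : ∀ j, MeasurableSet (G j))
    (hindep : ∀ j, μ (disjointed E j ∩ G j) = μ (disjointed E j) * μ (G j))
    (hp : ∀ j, p ≤ μ (G j)) (hH : ∀ j, disjointed E j ∩ G j ⊆ H) :
    p * μ (⋃ j, E j) ≤ μ H := by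
  have hdisj : Pairwise (Function.onFun Disjoint fun j => disjointed E j ∩ G j) :=
    fun i j hij => (disjoint_disjointed E hij).mono inter_subset_left inter_subset_left
  calc p * μ (⋃ j, E j) = ∑' j, p * μ (disjointed E j) := by
        rw [← iUnion_disjointed, measure_iUnion (disjoint_disjointed E)
          (MeasurableSet.disjointed hE), ENNReal.tsum_mul_left]
    _ ≤ ∑' j, μ (disjointed E j ∩ G j) := ENNReal.tsum_le_tsum fun j => by
        rw [hindep, mul_comm]
        gcongr
        exact hp j
    _ = μ (⋃ j, disjointed E j ∩ G j) :=
        (measure_iUnion hdisj fun j => (MeasurableSet.disjointed hE j).inter (hG j)).symm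
    _ ≤ μ H := measure_mono (iUnion_subset hH)

lemma exists_monotone_extension {t : ℕ → ℝ} (ht : Monotone t) (ht0 : 0 ≤ t 0) (j : ℕ) {v : ℝ}
    (hv : t j ≤ v) :
    ∃ g : ℕ → ℝ, Monotone g ∧ (∀ i, 0 ≤ g i) ∧ g 0 = 0 ∧ (∀ i ≤ j, g (i + 1) = t i) ∧
      g (j + 2) = v := by
  set s : ℕ → ℝ := fun i => if i ≤ j then t i else v with hs_def
  have hs : Monotone s := by
    intro k k' hkk'
    simp only [hs_def]
    split_ifs with hk hk'
    · exact ht hkk'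
    · exact (ht hk).trans hv
    · omega
    · exact le_rfl
  have hs0 : 0 ≤ s 0 := by simpa [hs_def] using ht0
  refine ⟨fun i => if i = 0 then 0 else s (i - 1), monotone_nat_of_le_succ fun i => ?_,
    fun i => ?_, rfl, fun i hi => by simp [hs_def, hi], by simp [hs_def]⟩
  · rcases i with _ | i
    · simpa using hs0
    · simpa using hs (Nat.le_succ i)
  · dsimp only
    split_ifs
    · exact le_rfl
    · exact hs0.trans (hs (Nat.zero_le _))

-- Each grid is a monotone sequence of times in `[u, v]`, as the first-entrance argument needs,
-- and the grids are nested.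
noncomputable def dyadicGrid (u v : ℝ) (N k : ℕ) : ℝ := min (u + k / 2 ^ N) v

section DyadicGrid

variable {u v : ℝ}

lemma dyadicGrid_mono (N : ℕ) : Monotone (dyadicGrid u v N) := fun k k' hkk' => by
  unfold dyadicGrid; gcongr

lemma dyadicGrid_mem_Icc (huv : u ≤ v) (N k : ℕ) : dyadicGrid u v N k ∈ Icc u v :=
  ⟨le_min (le_add_of_nonneg_right (by positivity)) huv, min_le_right _ _⟩

lemma dyadicGrid_succ_two_mul (N k : ℕ) :
    dyadicGrid u v (N + 1) (2 * k) = dyadicGrid u v N k := by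
  unfold dyadicGrid; rw [pow_succ]; push_cast; ring_nf

lemma exists_dyadicGrid_dist_lt {t δ : ℝ} (ht : t ∈ Icc u v) (hδ : 0 < δ) :
    ∃ N k, dist (dyadicGrid u v N k) t < δ := by
  obtain ⟨N, hN⟩ := exists_pow_lt_of_lt_one hδ (by norm_num : (1 / 2 : ℝ) < 1)
  set k := ⌊(t - u) * 2 ^ N⌋₊
  have h2N : (0 : ℝ) < 2 ^ N := by positivity
  have hpow : (1 / 2 : ℝ) ^ N * 2 ^ N = 1 := by rw [← mul_pow]; norm_num
  have hlow : (k : ℝ) / 2 ^ N ≤ t - u :=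
    (div_le_iff₀ h2N).mpr (Nat.floor_le (mul_nonneg (by linarith [ht.1]) h2N.le))
  have hhigh : t - u - (1 / 2) ^ N < k / 2 ^ N := by
    rw [lt_div_iff₀ h2N]; nlinarith [Nat.lt_floor_add_one ((t - u) * 2 ^ N)]
  have hk : dyadicGrid u v N k = u + k / 2 ^ N := min_eq_left (by linarith [ht.2])
  exact ⟨N, k, by rw [Real.dist_eq, hk, abs_lt]; constructor <;> linarith⟩

end DyadicGrid

namespace IsBrownianMotion

variable {Ω : Type*} [MeasurableSpace Ω] {μ : Measure Ω} {B : ℝ → Ω → ℝ}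

lemma map_eq_gaussianReal (hB : IsBrownianMotion μ B) {t : ℝ} (ht : 0 ≤ t) :
    μ.map (B t) = gaussianReal 0 t.toNNReal := by
  simpa [hB.start] using hB.gauss_incr 0 t le_rfl ht

lemma measure_preimage_le_volume (hB : IsBrownianMotion μ B) {v : ℝ} (hv : 1 ≤ v) (s : Set ℝ) :
    μ (B v ⁻¹' s) ≤ volume s :=
  calc μ (B v ⁻¹' s) ≤ μ.map (B v) s := Measure.le_map_apply (hB.measurable v).aemeasurable s
    _ ≤ volume s := by
        rw [hB.map_eq_gaussianReal (zero_le_one.trans hv)]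
        exact gaussianReal_le_volume 0 (by rwa [Real.coe_toNNReal _ (by linarith)]) s

lemma three_quarters_le_measure_abs_sub_lt (hB : IsBrownianMotion μ B) {s v x : ℝ} (hs : 0 ≤ s)
    (hsv : s ≤ v) (hx : 0 < x) (hvx : v - s ≤ x ^ 2) :
    ENNReal.ofReal (3 / 4) ≤ μ {ω | |B v ω - B s ω| < 2 * x} := by
  have := hB.isProbabilityMeasure
  have hBm := hB.measurable
  have htail : μ {ω | |B v ω - B s ω| < 2 * x}ᶜ ≤ ENNReal.ofReal (1 / 4) := by
    have hpre : {ω | |B v ω - B s ω| < 2 * x}ᶜ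
        = (fun ω => B v ω - B s ω) ⁻¹' {y | 2 * x ≤ |y - 0|} := by
      ext ω; simp
    rw [hpre, ← Measure.map_apply (by fun_prop) (measurableSet_le measurable_const (by fun_prop)),
      hB.gauss_incr s v hs hsv]
    refine (gaussianReal_le_abs_sub_le_div_sq 0 _ (by positivity)).trans
      (ENNReal.ofReal_le_ofReal ?_)
    rw [Real.coe_toNNReal _ (sub_nonneg.mpr hsv), div_le_iff₀ (by positivity)]
    nlinarith
  have hS : MeasurableSet {ω | |B v ω - B s ω| < 2 * x} :=
    measurableSet_lt (by fun_prop) measurable_const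
  calc ENNReal.ofReal (3 / 4) = 1 - ENNReal.ofReal (1 / 4) := by
        rw [← ENNReal.ofReal_one, ← ENNReal.ofReal_sub _ (by norm_num)]; norm_num
    _ ≤ 1 - μ {ω | |B v ω - B s ω| < 2 * x}ᶜ := tsub_le_tsub_left htail 1
    _ = μ {ω | |B v ω - B s ω| < 2 * x} := by
        rw [prob_compl_eq_one_sub hS, ENNReal.sub_sub_cancel ENNReal.one_ne_top prob_le_one]

lemma sum_range_increment (hB : IsBrownianMotion μ B) {g : ℕ → ℝ} (hg : g 0 = 0) (n : ℕ)
    (ω : Ω) : ∑ l ∈ Finset.range n, (B (g (l + 1)) ω - B (g l) ω) = B (g n) ω := by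
  rw [Finset.sum_range_sub (fun l => B (g l) ω), hg, hB.start, sub_zero]

lemma indepFun_sub (hB : IsBrownianMotion μ B) {t : ℕ → ℝ} (ht : Monotone t) (ht0 : 0 ≤ t 0)
    (j : ℕ) {v : ℝ} (hv : t j ≤ v) :
    IndepFun (fun ω (i : Fin (j + 1)) => B (t i) ω) (fun ω => B v ω - B (t j) ω) μ := by
  obtain ⟨g, hg_mono, hg_nonneg, hg0, hgt, hgv⟩ := exists_monotone_extension ht ht0 j hv
  have hindep := (hB.indep_incr (j + 2) g hg_nonneg hg_mono).indepFun_finset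
    {Fin.last (j + 1)}ᶜ {Fin.last (j + 1)} disjoint_compl_left
    fun i => (hB.measurable _).sub (hB.measurable _)
  -- `B (t i)` is the partial sum of the first `i + 1` increments along `g`
  set φ : (({Fin.last (j + 1)}ᶜ : Finset (Fin (j + 2))) → ℝ) → Fin (j + 1) → ℝ :=
    fun y i => ∑ l ∈ Finset.Iic i, y ⟨l.castSucc, by simp [Fin.castSucc_ne_last]⟩
  set ψ : (({Fin.last (j + 1)} : Finset (Fin (j + 2))) → ℝ) → ℝ :=
    fun y => y ⟨_, Finset.mem_singleton_self _⟩
  have hφ : Measurable φ := by fun_prop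
  have hψ : Measurable ψ := by fun_prop
  convert hindep.comp hφ hψ using 1
  · ext ω i
    have hsum := Finset.sum_map (Finset.Iic i) Fin.valEmbedding
      fun l => B (g (l + 1)) ω - B (g l) ω
    rw [Fin.map_valEmbedding_Iic, ← Nat.range_succ_eq_Iic, hB.sum_range_increment hg0,
      hgt i (Nat.lt_succ_iff.mp i.2)] at hsum
    simpa [φ] using hsum
  · ext ω
    simp [ψ, hgv, hgt j le_rfl]

lemma measure_disjointed_inter_eq_mul (hB : IsBrownianMotion μ B) {t : ℕ → ℝ} (ht : Monotone t)
    (ht0 : 0 ≤ t 0) (j : ℕ) {v : ℝ} (hv : t j ≤ v) {S T : Set ℝ} (hS : MeasurableSet S)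
    (hT : MeasurableSet T) :
    μ (disjointed (fun k => B (t k) ⁻¹' S) j ∩ (fun ω => B v ω - B (t j) ω) ⁻¹' T)
      = μ (disjointed (fun k => B (t k) ⁻¹' S) j) * μ ((fun ω => B v ω - B (t j) ω) ⁻¹' T) := by
  set M : Set (Fin (j + 1) → ℝ) :=
    (fun y => y (Fin.last j)) ⁻¹' S ∩ ⋂ i : Fin j, (fun y => y i.castSucc) ⁻¹' Sᶜ
  have hM : MeasurableSet M := (hS.preimage (measurable_pi_apply _)).inter
    (MeasurableSet.iInter fun i => hS.compl.preimage (measurable_pi_apply _))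
  have hpre : disjointed (fun k => B (t k) ⁻¹' S) j
      = (fun ω (i : Fin (j + 1)) => B (t i) ω) ⁻¹' M := by
    ext ω
    simp [M, disjointed_eq_inter_compl, Fin.forall_iff]
  rw [hpre]
  exact (hB.indepFun_sub ht ht0 j hv).measure_inter_preimage_eq_mul M T hM hT

lemma mul_measure_iUnion_le_of_monotone (hB : IsBrownianMotion μ B) {t : ℕ → ℝ}
    (ht : Monotone t) {u v x α β : ℝ} (hu : 0 ≤ u) (hv : 1 ≤ v) (htuv : ∀ k, t k ∈ Icc u v)
    (hx : 0 < x) (hvx : v - u ≤ x ^ 2) :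
    ENNReal.ofReal (3 / 4) * μ (⋃ k, B (t k) ⁻¹' Icc α β)
      ≤ ENNReal.ofReal (β - α + 4 * x) := by
  have hBm := hB.measurable
  have hG_eq : ∀ j, {ω | |B v ω - B (t j) ω| < 2 * x}
      = (fun ω => B v ω - B (t j) ω) ⁻¹' Ioo (-(2 * x)) (2 * x) := fun j => by
    ext ω; simp [abs_lt]
  calc ENNReal.ofReal (3 / 4) * μ (⋃ k, B (t k) ⁻¹' Icc α β)
      ≤ μ (B v ⁻¹' Icc (α - 2 * x) (β + 2 * x)) := by
        refine mul_measure_iUnion_le_of_disjointed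
          (G := fun j => {ω | |B v ω - B (t j) ω| < 2 * x})
          (fun k => hB.measurable _ measurableSet_Icc)
          (fun j => measurableSet_lt (by fun_prop) measurable_const) (fun j => ?_) (fun j => ?_)
          (fun j => ?_)
        · rw [hG_eq]
          exact hB.measure_disjointed_inter_eq_mul ht (hu.trans (htuv 0).1) j (htuv j).2
            measurableSet_Icc measurableSet_Ioo
        · exact hB.three_quarters_le_measure_abs_sub_lt (hu.trans (htuv j).1) (htuv j).2 hx
            (by linarith [(htuv j).1])
        · rintro ω ⟨hωE, hωG⟩
          have hωE := disjointed_subset _ j hωE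
          simp only [mem_preimage, mem_Icc, abs_lt] at hωE hωG ⊢
          constructor <;> linarith [hωE.1, hωE.2, hωG.1, hωG.2]
    _ ≤ volume (Icc (α - 2 * x) (β + 2 * x)) := hB.measure_preimage_le_volume hv _
    _ = ENNReal.ofReal (β - α + 4 * x) := by rw [Real.volume_Icc]; ring_nf

lemma measure_exists_mem_Icc_le (hB : IsBrownianMotion μ B) {u v x α β : ℝ} (hu : 0 ≤ u)
    (huv : u ≤ v) (hv : 1 ≤ v) (hx : 0 < x) (hvx : v - u ≤ x ^ 2) :
    μ {ω | ∃ t ∈ Icc u v, B t ω ∈ Icc α β} ≤ ENNReal.ofReal (4 / 3 * (β - α + 6 * x)) := by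
  set F : ℕ → Set Ω := fun N => ⋃ k, B (dyadicGrid u v N k) ⁻¹' Icc (α - x) (β + x)
  have hF : Monotone F := monotone_nat_of_le_succ fun N ω hω => by
    obtain ⟨k, hk⟩ := mem_iUnion.mp hω
    exact mem_iUnion.mpr ⟨2 * k, by rwa [mem_preimage, dyadicGrid_succ_two_mul]⟩
  have hsub : {ω | ∃ t ∈ Icc u v, B t ω ∈ Icc α β} ⊆ ⋃ N, F N := by
    rintro ω ⟨t, ht, hBt⟩
    obtain ⟨δ, hδ, hclose⟩ :=
      Metric.continuousAt_iff.mp ((hB.cont_paths ω).continuousAt (x := t)) x hx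
    obtain ⟨N, k, hNk⟩ := exists_dyadicGrid_dist_lt ht hδ
    have hdist := abs_lt.mp (hclose hNk)
    exact mem_iUnion.mpr ⟨N, mem_iUnion.mpr ⟨k, by linarith [hBt.1], by linarith [hBt.2]⟩⟩
  have hmul : ENNReal.ofReal (3 / 4) * μ {ω | ∃ t ∈ Icc u v, B t ω ∈ Icc α β}
      ≤ ENNReal.ofReal (β - α + 6 * x) := calc
    _ ≤ ENNReal.ofReal (3 / 4) * μ (⋃ N, F N) := by gcongr
    _ = ⨆ N, ENNReal.ofReal (3 / 4) * μ (F N) := by rw [hF.measure_iUnion, ENNReal.mul_iSup]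
    _ ≤ ENNReal.ofReal (β + x - (α - x) + 4 * x) := iSup_le fun N =>
        hB.mul_measure_iUnion_le_of_monotone (dyadicGrid_mono N) hu hv
          (dyadicGrid_mem_Icc huv N) hx hvx
    _ = ENNReal.ofReal (β - α + 6 * x) := by ring_nf
  calc μ {ω | ∃ t ∈ Icc u v, B t ω ∈ Icc α β}
      = ENNReal.ofReal (4 / 3) *
          (ENNReal.ofReal (3 / 4) * μ {ω | ∃ t ∈ Icc u v, B t ω ∈ Icc α β}) := by
        rw [← mul_assoc, ← ENNReal.ofReal_mul (by norm_num)]; norm_num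
    _ ≤ ENNReal.ofReal (4 / 3) * ENNReal.ofReal (β - α + 6 * x) := by gcongr
    _ = ENNReal.ofReal (4 / 3 * (β - α + 6 * x)) := (ENNReal.ofReal_mul (by norm_num)).symm

end IsBrownianMotion

section CantorSet

variable {γ : ℝ} {f : ℝ → ℝ}

/- `cantorMap γ w` maps `[1, 2]` onto the interval of `middleCantorPre γ w.length` with address
`w` (the first letter picks the outermost contraction), and `f` maps that interval onto
`[binaryValue w, binaryValue w + 1] / 2 ^ w.length`. -/
def cantorMap (γ : ℝ) : List Bool → ℝ → ℝ
  | [] => id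
  | b :: w => (fun x => if b then 2 - γ * (2 - x) else 1 + γ * (x - 1)) ∘ cantorMap γ w

def binaryValue : List Bool → ℕ
  | [] => 0
  | b :: w => (if b then 2 ^ w.length else 0) + binaryValue w

lemma binaryValue_lt (w : List Bool) : binaryValue w < 2 ^ w.length := by
  induction w with
  | nil => simp [binaryValue]
  | cons b w ih => cases b <;> simp [binaryValue, pow_succ] <;> omega

lemma binaryValue_injective_of_length_eq {w w' : List Bool} (hlen : w.length = w'.length)
    (hval : binaryValue w = binaryValue w') : w = w' := by
  induction w generalizing w' with
  | nil => exact (List.length_eq_zero_iff.mp hlen.symm).symm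
  | cons b w ih =>
    obtain _ | ⟨b', w'⟩ := w'
    · simp at hlen
    · simp only [List.length_cons, Nat.add_right_cancel_iff] at hlen
      have h := binaryValue_lt w
      have h' := binaryValue_lt w'
      simp only [binaryValue, hlen] at hval h
      cases b <;> cases b' <;> simp at hval
      all_goals first | omega | rw [ih hlen (by omega)]

lemma cantorMap_eq_add (γ : ℝ) (w : List Bool) (x : ℝ) :
    cantorMap γ w x = cantorMap γ w 1 + γ ^ w.length * (x - 1) := by
  induction w with
  | nil => simp [cantorMap]
  | cons b w ih => cases b <;> simp [cantorMap, ih, pow_succ] <;> ring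

lemma cantorMap_mem_Icc (hγ0 : 0 ≤ γ) (hγ1 : γ ≤ 1) (w : List Bool) {x : ℝ}
    (hx : x ∈ Icc (1 : ℝ) 2) : cantorMap γ w x ∈ Icc (1 : ℝ) 2 := by
  induction w with
  | nil => exact hx
  | cons b w ih =>
    obtain ⟨h1, h2⟩ := ih
    cases b <;> simp only [cantorMap, Function.comp_apply, Bool.false_eq_true, if_false, if_true,
      mem_Icc] <;> constructor <;> nlinarith

lemma exists_cantorMap_of_mem_middleCantorPre {n : ℕ} {t : ℝ}
    (ht : t ∈ middleCantorPre γ n) :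
    ∃ w : List Bool, w.length = n ∧ ∃ x ∈ Icc (1 : ℝ) 2, t = cantorMap γ w x := by
  induction n generalizing t with
  | zero => exact ⟨[], rfl, t, ht, rfl⟩
  | succ n ih =>
    rcases ht with ⟨y, hy, rfl⟩ | ⟨y, hy, rfl⟩ <;> obtain ⟨w, rfl, x, hx, rfl⟩ := ih hy
    · exact ⟨false :: w, rfl, x, hx, by simp [cantorMap]⟩
    · exact ⟨true :: w, rfl, x, hx, by simp [cantorMap]⟩

namespace IsCantorFunction

lemma apply_left (hf : IsCantorFunction γ f) (hγ0 : 0 < γ) {x : ℝ} (hx : x ∈ Icc (1 : ℝ) 2) :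
    f (1 + γ * (x - 1)) = f x / 2 := by
  have h := hf.2.1 (γ * (x - 1))
    ⟨mul_nonneg hγ0.le (sub_nonneg.mpr hx.1),
      by nlinarith [mul_nonneg hγ0.le (sub_nonneg.mpr hx.2)]⟩
  rwa [mul_div_cancel_left₀ _ hγ0.ne', add_sub_cancel] at h

lemma apply_right (hf : IsCantorFunction γ f) (hγ0 : 0 < γ) {x : ℝ} (hx : x ∈ Icc (1 : ℝ) 2) :
    f (2 - γ * (2 - x)) = 1 / 2 + f x / 2 := by
  have h := hf.2.2.2 (1 - γ * (2 - x))
    ⟨by nlinarith [mul_nonneg hγ0.le (sub_nonneg.mpr hx.1)],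
      by nlinarith [mul_nonneg hγ0.le (sub_nonneg.mpr hx.2)]⟩
  rwa [show 1 + (1 - γ * (2 - x)) = 2 - γ * (2 - x) by ring,
    show 1 - γ * (2 - x) - (1 - γ) = γ * (x - 1) by ring, mul_div_cancel_left₀ _ hγ0.ne',
    add_sub_cancel] at h

lemma exists_eq_self_similar (hf : IsCantorFunction γ f) (hγ0 : 0 < γ) {x : ℝ}
    (hx : x ∈ Icc (1 : ℝ) 2) :
    ∃ y ∈ Icc (1 : ℝ) 2, f x = f y / 2 ∨ f x = 1 / 2 ∨ f x = 1 / 2 + f y / 2 := by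
  obtain ⟨hx1, hx2⟩ := hx
  rcases le_or_gt (x - 1) γ with hleft | hleft
  · refine ⟨1 + (x - 1) / γ, ⟨?_, ?_⟩, Or.inl ?_⟩
    · linarith [div_nonneg (sub_nonneg.mpr hx1) hγ0.le]
    · linarith [(div_le_one hγ0).mpr hleft]
    · simpa using hf.2.1 (x - 1) ⟨by linarith, hleft⟩
  rcases le_or_gt (1 - γ) (x - 1) with hright | hright
  · refine ⟨1 + (x - 1 - (1 - γ)) / γ, ⟨?_, ?_⟩, Or.inr (Or.inr ?_)⟩
    · linarith [div_nonneg (sub_nonneg.mpr hright) hγ0.le]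
    · linarith [(div_le_one hγ0).mpr (by linarith : x - 1 - (1 - γ) ≤ γ)]
    · simpa using hf.2.2.2 (x - 1) ⟨hright, by linarith⟩
  · exact ⟨x, ⟨hx1, hx2⟩,
      Or.inr (Or.inl (by simpa using hf.2.2.1 (x - 1) ⟨hleft.le, hright.le⟩))⟩

lemma mapsTo (hf : IsCantorFunction γ f) (hγ0 : 0 < γ) :
    MapsTo f (Icc 1 2) (Icc 0 1) := by
  obtain ⟨xm, hxm, hmin⟩ := isCompact_Icc.exists_isMinOn (nonempty_Icc.mpr one_le_two) hf.1
  obtain ⟨xM, hxM, hmax⟩ := isCompact_Icc.exists_isMaxOn (nonempty_Icc.mpr one_le_two) hf.1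
  have hm : 0 ≤ f xm := by
    obtain ⟨y, hy, h | h | h⟩ := hf.exists_eq_self_similar hγ0 hxm <;>
      linarith [isMinOn_iff.mp hmin y hy]
  have hM : f xM ≤ 1 := by
    obtain ⟨y, hy, h | h | h⟩ := hf.exists_eq_self_similar hγ0 hxM <;>
      linarith [isMaxOn_iff.mp hmax y hy]
  exact fun x hx => ⟨hm.trans (hmin hx), (hmax hx).trans hM⟩

lemma apply_cantorMap (hf : IsCantorFunction γ f) (hγ0 : 0 < γ) (hγ1 : γ ≤ 1) (w : List Bool)
    {x : ℝ} (hx : x ∈ Icc (1 : ℝ) 2) :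
    f (cantorMap γ w x) = (binaryValue w + f x) / 2 ^ w.length := by
  induction w with
  | nil => simp [cantorMap, binaryValue]
  | cons b w ih =>
    have hmem := cantorMap_mem_Icc hγ0.le hγ1 w hx
    cases b
    · simp only [cantorMap, Function.comp_apply, Bool.false_eq_true, if_false]
      rw [hf.apply_left hγ0 hmem, ih]
      simp [binaryValue, pow_succ]; ring
    · simp only [cantorMap, Function.comp_apply, if_true]
      rw [hf.apply_right hγ0 hmem, ih]
      simp [binaryValue, pow_succ]; field_simp; ring

lemma exists_word_of_mem_middleCantorSet (hf : IsCantorFunction γ f) (hγ0 : 0 < γ)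
    (hγ1 : γ ≤ 1) {t : ℝ} (ht : t ∈ middleCantorSet γ) (n : ℕ) :
    ∃ w : List Bool, w.length = n ∧ t ∈ Icc (cantorMap γ w 1) (cantorMap γ w 1 + γ ^ n) ∧
      f t ∈ Icc ((binaryValue w : ℝ) / 2 ^ n) ((binaryValue w + 1) / 2 ^ n) := by
  obtain ⟨w, rfl, x, hx, rfl⟩ := exists_cantorMap_of_mem_middleCantorPre (mem_iInter.mp ht n)
  have hfx := hf.mapsTo hγ0 hx
  refine ⟨w, rfl, ?_, ?_⟩
  · rw [cantorMap_eq_add γ w x]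
    constructor <;> nlinarith [hx.1, hx.2, pow_pos hγ0 w.length]
  · rw [hf.apply_cantorMap hγ0 hγ1 w hx]
    constructor <;> gcongr <;> linarith [hfx.1, hfx.2]

end IsCantorFunction

end CantorSet

lemma mem_Icc_floor_of_mem_dyadic_Icc {a b y : ℝ} {n k : ℕ} (ha : 0 ≤ a)
    (hab : b - a ≤ (1 / 2) ^ n) (hy : y ∈ Icc a b)
    (hyk : y ∈ Icc ((k : ℝ) / 2 ^ n) ((k + 1) / 2 ^ n)) :
    k ∈ Finset.Icc (⌊2 ^ n * a⌋₊ - 1) (⌊2 ^ n * a⌋₊ + 1) := by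
  have h2n : (0 : ℝ) < 2 ^ n := by positivity
  have hpow : (1 / 2 : ℝ) ^ n * 2 ^ n = 1 := by rw [← mul_pow]; norm_num
  have hfl := Nat.floor_le (mul_nonneg h2n.le ha)
  have hfl' := Nat.lt_floor_add_one (2 ^ n * a)
  have hk1 : (k : ℝ) ≤ 2 ^ n * b := by
    have := (div_le_iff₀ h2n).mp (hyk.1.trans hy.2); linarith
  have hk2 : 2 ^ n * a ≤ k + 1 := by
    have := (le_div_iff₀ h2n).mp (hy.1.trans hyk.2); linarith
  have hup : (k : ℝ) < ⌊2 ^ n * a⌋₊ + 2 := by nlinarith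
  have hlow : (⌊2 ^ n * a⌋₊ : ℝ) < k + 2 := by linarith
  rw [Finset.mem_Icc]
  constructor
  · have : ⌊2 ^ n * a⌋₊ < k + 2 := by exact_mod_cast hlow
    omega
  · have : k < ⌊2 ^ n * a⌋₊ + 2 := by exact_mod_cast hup
    omega

lemma le_ofReal_mul_of_forall_le_pow_half {m : ℝ≥0∞} {C d : ℝ} (hC : 0 ≤ C) (hd0 : 0 ≤ d)
    (hd1 : d ≤ 1) (h : ∀ n : ℕ, d ≤ (1 / 2) ^ n → m ≤ ENNReal.ofReal (C * (1 / 2) ^ n)) :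
    m ≤ ENNReal.ofReal (2 * C * d) := by
  rcases hd0.eq_or_lt with rfl | hd
  · have hlim := ENNReal.tendsto_ofReal (by
      simpa using (tendsto_pow_atTop_nhds_zero_of_lt_one (r := (1 / 2 : ℝ)) (by norm_num)
        (by norm_num)).const_mul C : Tendsto (fun n : ℕ => C * (1 / 2 : ℝ) ^ n) atTop (𝓝 0))
    rw [ENNReal.ofReal_zero] at hlim
    exact (ge_of_tendsto' hlim fun n => h n (by positivity)).trans bot_le
  · obtain ⟨n, hlt, hle⟩ := exists_nat_pow_near_of_lt_one hd hd1 (by norm_num : (0 : ℝ) < 1 / 2)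
      (by norm_num)
    refine (h n hle).trans (ENNReal.ofReal_le_ofReal ?_)
    rw [pow_succ] at hlt
    nlinarith

namespace IsBrownianMotion

variable {Ω : Type*} [MeasurableSpace Ω] {μ : Measure Ω} {B : ℝ → Ω → ℝ}

lemma measure_exists_mem_cantorMap_Icc_le (hB : IsBrownianMotion μ B) {γ : ℝ} (hγ0 : 0 < γ)
    (hγ : γ ≤ 1 / 4) (w : List Bool) {a b : ℝ} (hab : b - a ≤ (1 / 2) ^ w.length) :
    μ {ω | ∃ t ∈ Icc (cantorMap γ w 1) (cantorMap γ w 1 + γ ^ w.length), B t ω ∈ Icc a b}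
      ≤ ENNReal.ofReal (28 / 3 * (1 / 2) ^ w.length) := by
  have hp := cantorMap_mem_Icc hγ0.le (by linarith) w (left_mem_Icc.mpr one_le_two)
  have hγn : γ ^ w.length ≤ ((1 / 2) ^ w.length) ^ 2 := calc
    γ ^ w.length ≤ (1 / 4) ^ w.length := pow_le_pow_left₀ hγ0.le hγ _
    _ = ((1 / 2) ^ w.length) ^ 2 := by rw [← pow_mul, mul_comm, pow_mul]; norm_num
  refine (hB.measure_exists_mem_Icc_le (x := (1 / 2) ^ w.length) (by linarith [hp.1])
    (le_add_of_nonneg_right (by positivity)) (by linarith [hp.1, pow_pos hγ0 w.length])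
    (by positivity) (by rwa [add_sub_cancel_left])).trans (ENNReal.ofReal_le_ofReal ?_)
  linarith

lemma measure_hit_cantorGraph_le (hB : IsBrownianMotion μ B) {γ : ℝ} (hγ0 : 0 < γ)
    (hγ : γ ≤ 1 / 4) {f : ℝ → ℝ} (hf : IsCantorFunction γ f) {a b : ℝ} (ha : 0 ≤ a) {n : ℕ}
    (hn : b - a ≤ (1 / 2) ^ n) :
    μ {ω | ∃ t ∈ middleCantorSet γ ∩ f ⁻¹' Icc a b, B t ω = f t}
      ≤ ENNReal.ofReal (28 * (1 / 2) ^ n) := by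
  set K := Finset.Icc (⌊2 ^ n * a⌋₊ - 1) (⌊2 ^ n * a⌋₊ + 1)
  -- `E k`: a visit to `[a, b]` during the level-`n` interval that `f` maps onto
  -- `[k, k + 1] / 2 ^ n`
  set E : ℕ → Set Ω := fun k => {ω | ∃ w : List Bool, w.length = n ∧ binaryValue w = k ∧
    ∃ t ∈ Icc (cantorMap γ w 1) (cantorMap γ w 1 + γ ^ n), B t ω ∈ Icc a b}
  have hsub : {ω | ∃ t ∈ middleCantorSet γ ∩ f ⁻¹' Icc a b, B t ω = f t} ⊆ ⋃ k ∈ K, E k := by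
    rintro ω ⟨t, ⟨htC, htab⟩, hBt⟩
    obtain ⟨w, hw, htw, hft⟩ :=
      hf.exists_word_of_mem_middleCantorSet hγ0 (by linarith) htC n
    exact mem_iUnion₂.mpr ⟨binaryValue w, mem_Icc_floor_of_mem_dyadic_Icc ha hn htab hft,
      w, hw, rfl, t, htw, hBt ▸ htab⟩
  have hE : ∀ k, μ (E k) ≤ ENNReal.ofReal (28 / 3 * (1 / 2) ^ n) := by
    intro k
    by_cases hk : ∃ w : List Bool, w.length = n ∧ binaryValue w = k
    · obtain ⟨w, rfl, rfl⟩ := hk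
      refine (measure_mono ?_).trans (hB.measure_exists_mem_cantorMap_Icc_le hγ0 hγ w hn)
      rintro ω ⟨w', hw', hval, hω⟩
      rwa [binaryValue_injective_of_length_eq hw' hval] at hω
    · have : E k = ∅ := eq_empty_of_forall_notMem fun ω ⟨w, hw, hval, _⟩ => hk ⟨w, hw, hval⟩
      simp [this]
  have hK : (K.card : ℝ) ≤ 3 := by
    have : K.card ≤ 3 := by simp only [K, Nat.card_Icc]; omega
    exact_mod_cast this
  calc μ {ω | ∃ t ∈ middleCantorSet γ ∩ f ⁻¹' Icc a b, B t ω = f t}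
      ≤ μ (⋃ k ∈ K, E k) := measure_mono hsub
    _ ≤ ∑ k ∈ K, μ (E k) := measure_biUnion_finset_le K E
    _ ≤ ∑ _k ∈ K, ENNReal.ofReal (28 / 3 * (1 / 2) ^ n) := Finset.sum_le_sum fun k _ => hE k
    _ = ENNReal.ofReal (K.card * (28 / 3 * (1 / 2) ^ n)) := by
        rw [Finset.sum_const, nsmul_eq_mul, ENNReal.ofReal_mul (Nat.cast_nonneg _),
          ENNReal.ofReal_natCast]
    _ ≤ ENNReal.ofReal (28 * (1 / 2) ^ n) :=
        ENNReal.ofReal_le_ofReal (by nlinarith [pow_pos (by norm_num : (0 : ℝ) < 1 / 2) n])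

end IsBrownianMotion

/-- For `0 < γ < 1/4` there is `c > 0` such that for every interval `J = [a,b] ⊆ [0,1]`,
the probability that Brownian motion meets the graph of the Cantor function `f` over
`C_γ ∩ f⁻¹(J)` is at most `c·|J|`. -/
theorem hitting_prob_preimage_le {Ω : Type*} [MeasurableSpace Ω] (μ : Measure Ω) (B : ℝ → Ω → ℝ)
    (hB : IsBrownianMotion μ B)
    (γ : ℝ) (hγ0 : 0 < γ) (hγ : γ < 1 / 4)
    (f : ℝ → ℝ) (hf : IsCantorFunction γ f) :
    ∃ c : ℝ, 0 < c ∧ ∀ a b : ℝ, 0 ≤ a → a ≤ b → b ≤ 1 →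
      μ {ω | ∃ t ∈ middleCantorSet γ ∩ f ⁻¹' Set.Icc a b, B t ω = f t}
        ≤ ENNReal.ofReal (c * (b - a)) := by
  refine ⟨56, by norm_num, fun a b ha hab hb1 => ?_⟩
  convert le_ofReal_mul_of_forall_le_pow_half (by norm_num) (sub_nonneg.mpr hab) (by linarith)
    fun n hn => hB.measure_hit_cantorGraph_le hγ0 hγ.le hf ha hn using 2
  norm_num
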